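/- Let X be a nonempty Polish zero-dimensional topological space all of whose compact subsets have empty interior. Then there exists a continuous map O_X : X → X which is topologically conjugate to the odometer O_1 on ℕ^ℕ; that is, there exists a homeomorphism g : ℕ^ℕ → X such that O_X = g ∘ O_1 ∘ g^{−1}. -/

import Mathlib

set_option linter.unusedSectionVars false

/-- The odometer `O₁` on the Baire space `Σ_{≥1} = ℕ₁^ℕ` of sequences of
positive integers: `O₁(w₁, w₂, w₃, …) = (1, …, 1 (w₁−1 times), w₂+1, w₃, …)`. -/
def baireOdometerOne (w : ℕ → ℕ+) : ℕ → ℕ+ := fun i =>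
  if i + 1 < (w 0 : ℕ) then 1
  else if i + 1 = (w 0 : ℕ) then w 1 + 1
  else w (i + 2 - (w 0 : ℕ))

open Set Metric TopologicalSpace

section aux
variable {X : Type*} [MetricSpace X] [SecondCountableTopology X]

/-- Partition a clopen set into countably many clopen pieces of small diameter. -/
lemma lemA (hbasis : IsTopologicalBasis {s : Set X | IsClopen s})
    (U : Set X) (hU : IsClopen U) (ε : ℝ) (hε : 0 < ε) :
    ∃ W : ℕ → Set X, (∀ i, IsClopen (W i)) ∧ (∀ i, W i ⊆ U) ∧
      (∀ i, ∀ y ∈ W i, ∀ z ∈ W i, dist y z ≤ ε) ∧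
      Pairwise (Function.onFun Disjoint W) ∧ (⋃ i, W i) = U := by
  set S : Set (Set X) := {s | IsClopen s ∧ s ⊆ U ∧ ∀ y ∈ s, ∀ z ∈ s, dist y z ≤ ε} with hS
  have hcover : ⋃₀ S = U := by
    apply subset_antisymm
    · exact sUnion_subset fun s hs => hs.2.1
    · intro x hx
      have hxu : x ∈ U ∩ ball x (ε/2) := ⟨hx, mem_ball_self (by linarith)⟩
      obtain ⟨s, hs, hxs, hsub⟩ := hbasis.exists_subset_of_mem_open hxu
        (hU.isOpen.inter isOpen_ball)
      refine ⟨s, ⟨hs, fun y hy => (hsub hy).1, fun y hy z hz => ?_⟩, hxs⟩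
      have h1 := (hsub hy).2
      have h2 := (hsub hz).2
      rw [mem_ball] at h1 h2
      have := dist_triangle_right y z x
      linarith
  obtain ⟨T, hTc, hTS, hTU⟩ := isOpen_sUnion_countable S (fun s hs => hs.1.isOpen)
  have hT' : (insert (∅ : Set X) T).Countable := hTc.insert _
  have hT'ne : (insert (∅ : Set X) T).Nonempty := ⟨∅, mem_insert _ _⟩
  obtain ⟨f, hf⟩ := (Set.countable_iff_exists_surjective ⟨_, hT'ne.some_mem⟩ |>.mp hT')
  set fs : ℕ → Set X := fun i => (f i : Set X) with hfs_def
  have hfs : ∀ i, IsClopen (fs i) ∧ fs i ⊆ U ∧ ∀ y ∈ fs i, ∀ z ∈ fs i, dist y z ≤ ε := by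
    intro i
    have : (fs i) ∈ insert (∅ : Set X) T := (f i).2
    rcases this with h | h
    · simp only [h]
      exact ⟨isClopen_empty, empty_subset _, fun y hy => absurd hy (notMem_empty y)⟩
    · exact hTS h
  have hUnion : (⋃ i, fs i) = U := by
    apply subset_antisymm
    · exact iUnion_subset fun i => (hfs i).2.1
    · intro x hx
      rw [← hcover] at hx
      rw [← hTU] at hx
      obtain ⟨t, htT, hxt⟩ := hx
      obtain ⟨i, hi⟩ := hf ⟨t, mem_insert_of_mem _ htT⟩
      refine mem_iUnion.2 ⟨i, ?_⟩
      show x ∈ (f i : Set X)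
      rw [hi]
      exact hxt
  refine ⟨fun i => fs i \ ⋃ j ∈ Finset.range i, fs j, fun i => ?_, fun i => ?_, fun i => ?_, ?_, ?_⟩
  · exact (hfs i).1.diff (isClopen_biUnion_finset (fun j _ => (hfs j).1))
  · exact diff_subset.trans (hfs i).2.1
  · exact fun y hy z hz => (hfs i).2.2 y hy.1 z hz.1
  · intro i j hij
    rcases hij.lt_or_gt with h | h
    · exact Set.disjoint_left.2 fun x hxi hxj =>
        hxj.2 (mem_biUnion (Finset.mem_range.2 h) hxi.1)
    · exact Set.disjoint_left.2 fun x hxi hxj =>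
        hxi.2 (mem_biUnion (Finset.mem_range.2 h) hxj.1)
  · apply subset_antisymm
    · exact iUnion_subset fun i => diff_subset.trans (hfs i).2.1
    · intro x hx
      classical
      have hex : ∃ i, x ∈ fs i := by
        rw [← hUnion] at hx; exact mem_iUnion.1 hx
      refine mem_iUnion.2 ⟨Nat.find hex, Nat.find_spec hex, ?_⟩
      intro hmem
      obtain ⟨j, hj, hxj⟩ := mem_iUnion₂.1 hmem
      exact Nat.find_min hex (Finset.mem_range.1 hj) hxj


/-- A nonempty clopen set in a complete space with no compact sets of nonempty
interior can be partitioned into countably infinitely many nonempty clopen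
pieces of small diameter. -/
lemma lemC [CompleteSpace X] (hbasis : IsTopologicalBasis {s : Set X | IsClopen s})
    (hcpt : ∀ K : Set X, IsCompact K → interior K = ∅)
    (U : Set X) (hU : IsClopen U) (hne : U.Nonempty) (ε : ℝ) (hε : 0 < ε) :
    ∃ V : ℕ+ → Set X, (∀ n, IsClopen (V n)) ∧ (∀ n, (V n).Nonempty) ∧
      (∀ n, ∀ y ∈ V n, ∀ z ∈ V n, dist y z ≤ ε) ∧
      Pairwise (Function.onFun Disjoint V) ∧ (⋃ n, V n) = U := by
  -- U is not totally bounded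
  have hnotTB : ¬ TotallyBounded U := by
    intro hTB
    have hcomp : IsCompact U :=
      isCompact_iff_totallyBounded_isComplete.2 ⟨hTB, hU.isClosed.isComplete⟩
    have := hcpt U hcomp
    rw [hU.isOpen.interior_eq] at this
    exact hne.ne_empty this
  rw [Metric.totallyBounded_iff] at hnotTB
  push_neg at hnotTB
  obtain ⟨ε₀, hε₀, hball⟩ := hnotTB
  set δ := min ε ε₀ with hδ
  have hδpos : 0 < δ := lt_min hε hε₀
  obtain ⟨W, hWc, hWU, hWd, hWdisj, hWun⟩ := lemA hbasis U hU (δ/2) (by linarith)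
  classical
  set I : Set ℕ := {i | (W i).Nonempty} with hI
  choose pt hpt using fun i : I => i.2
  have hIinf : I.Infinite := by
    by_contra h
    rw [Set.not_infinite] at h
    haveI := h.fintype
    refine hball (Set.range pt) (Set.finite_range pt) ?_
    intro x hx
    rw [← hWun] at hx
    obtain ⟨i, hxi⟩ := mem_iUnion.1 hx
    have hiI : i ∈ I := ⟨x, hxi⟩
    refine mem_biUnion (mem_range_self ⟨i, hiI⟩) ?_
    rw [mem_ball]
    have := hWd i x hxi (pt ⟨i, hiI⟩) (hpt ⟨i, hiI⟩)
    rw [dist_comm]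
    calc dist (pt ⟨i, hiI⟩) x = dist x (pt ⟨i, hiI⟩) := dist_comm _ _
      _ ≤ δ/2 := this
      _ < δ := by linarith
      _ ≤ ε₀ := min_le_right _ _
  haveI : Infinite I := hIinf.to_subtype
  haveI : Denumerable I := Nat.Subtype.denumerable I
  let e : ℕ+ ≃ I := (Denumerable.eqv ℕ+).trans (Denumerable.eqv I).symm
  refine ⟨fun n => W (e n), fun n => hWc _, fun n => (e n).2, fun n y hy z hz => le_trans (hWd _ y hy z hz) (by have := min_le_left ε ε₀; linarith), ?_, ?_⟩
  · intro i j hij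
    exact hWdisj (fun h => hij (e.injective (Subtype.ext h)))
  · apply subset_antisymm
    · exact iUnion_subset fun n => hWU _
    · intro x hx
      rw [← hWun] at hx
      obtain ⟨i, hxi⟩ := mem_iUnion.1 hx
      have hiI : i ∈ I := ⟨x, hxi⟩
      refine mem_iUnion.2 ⟨e.symm ⟨i, hiI⟩, ?_⟩
      have : ((e (e.symm ⟨i, hiI⟩)) : ℕ) = i := by rw [e.apply_symm_apply]
      rw [this]
      exact hxi

variable [CompleteSpace X] [Nonempty X]
variable (hbasis : IsTopologicalBasis {s : Set X | IsClopen s})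
variable (hcpt : ∀ K : Set X, IsCompact K → interior K = ∅)

/-- Choice of a partition of a nonempty clopen set into infinitely many
nonempty clopen small pieces. -/
noncomputable def splitSet (U : {U : Set X // IsClopen U ∧ U.Nonempty})
    (ε : ℝ) (hε : 0 < ε) : ℕ+ → Set X :=
  (lemC hbasis hcpt U.1 U.2.1 U.2.2 ε hε).choose

lemma splitSet_spec (U : {U : Set X // IsClopen U ∧ U.Nonempty}) (ε : ℝ) (hε : 0 < ε) :
    (∀ n, IsClopen (splitSet hbasis hcpt U ε hε n)) ∧
    (∀ n, (splitSet hbasis hcpt U ε hε n).Nonempty) ∧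
    (∀ n, ∀ y ∈ splitSet hbasis hcpt U ε hε n, ∀ z ∈ splitSet hbasis hcpt U ε hε n,
        dist y z ≤ ε) ∧
    Pairwise (Function.onFun Disjoint (splitSet hbasis hcpt U ε hε)) ∧
    (⋃ n, splitSet hbasis hcpt U ε hε n) = U.1 :=
  (lemC hbasis hcpt U.1 U.2.1 U.2.2 ε hε).choose_spec

/-- The tree of clopen sets: level `n`, branch `w` (only the first `n` values
of `w` matter). -/
noncomputable def treeS : ℕ → (ℕ → ℕ+) → {U : Set X // IsClopen U ∧ U.Nonempty}
  | 0, _ => ⟨univ, isClopen_univ, univ_nonempty⟩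
  | (n+1), w => ⟨splitSet hbasis hcpt (treeS n w) (1/2^n) (by positivity) (w n),
      (splitSet_spec hbasis hcpt _ _ _).1 _, (splitSet_spec hbasis hcpt _ _ _).2.1 _⟩

lemma treeS_congr : ∀ (n : ℕ) (w w' : ℕ → ℕ+), (∀ i, i < n → w i = w' i) →
    treeS hbasis hcpt n w = treeS hbasis hcpt n w'
  | 0, _, _, _ => rfl
  | (n+1), w, w', h => by
    have ih := treeS_congr n w w' (fun i hi => h i (Nat.lt_succ_of_lt hi))
    simp only [treeS, ih, h n (Nat.lt_succ_self n)]

lemma treeS_succ_subset (n : ℕ) (w : ℕ → ℕ+) :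
    (treeS hbasis hcpt (n+1) w : Set X) ⊆ treeS hbasis hcpt n w := by
  have h := (splitSet_spec hbasis hcpt (treeS hbasis hcpt n w) (1/2^n) (by positivity)).2.2.2.2
  intro x hx
  rw [← h]
  exact mem_iUnion.2 ⟨w n, hx⟩

lemma treeS_anti {m n : ℕ} (h : m ≤ n) (w : ℕ → ℕ+) :
    (treeS hbasis hcpt n w : Set X) ⊆ treeS hbasis hcpt m w := by
  induction n with
  | zero => rw [Nat.le_zero.1 h]
  | succ k ih =>
    rcases Nat.lt_succ_iff_lt_or_eq.1 (Nat.lt_succ_of_le h) with h' | h'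
    · exact (treeS_succ_subset hbasis hcpt k w).trans (ih (Nat.lt_succ_iff.1 h'))
    · rw [h']

lemma treeS_small (n : ℕ) (w : ℕ → ℕ+) :
    ∀ y ∈ (treeS hbasis hcpt (n+1) w : Set X), ∀ z ∈ (treeS hbasis hcpt (n+1) w : Set X),
      dist y z ≤ 1/2^n :=
  (splitSet_spec hbasis hcpt (treeS hbasis hcpt n w) (1/2^n) (by positivity)).2.2.1 _

lemma treeS_disjoint {n : ℕ} {w w' : ℕ → ℕ+} (hne : w n ≠ w' n)
    (hagree : ∀ i, i < n → w i = w' i) :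
    Disjoint (treeS hbasis hcpt (n+1) w : Set X) (treeS hbasis hcpt (n+1) w' : Set X) := by
  have heq : treeS hbasis hcpt n w = treeS hbasis hcpt n w' := treeS_congr hbasis hcpt n w w' hagree
  show Disjoint (splitSet hbasis hcpt (treeS hbasis hcpt n w) (1/2^n) (by positivity) (w n)) _
  rw [heq]
  exact (splitSet_spec hbasis hcpt (treeS hbasis hcpt n w') (1/2^n) (by positivity)).2.2.2.1 hne

lemma treeS_succ_union (n : ℕ) (w : ℕ → ℕ+) :
    (⋃ a : ℕ+, (treeS hbasis hcpt (n+1) (Function.update w n a) : Set X)) =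
      treeS hbasis hcpt n w := by
  have key : ∀ a : ℕ+, (treeS hbasis hcpt (n+1) (Function.update w n a) : Set X) =
      splitSet hbasis hcpt (treeS hbasis hcpt n w) (1/2^n) (by positivity) a := by
    intro a
    show (splitSet hbasis hcpt (treeS hbasis hcpt n (Function.update w n a)) (1/2^n)
      (by positivity) ((Function.update w n a) n) : Set X) = _
    rw [treeS_congr hbasis hcpt n (Function.update w n a) w
      (fun i hi => Function.update_of_ne (Nat.ne_of_lt hi) _ _),
      Function.update_self]
  simp only [key]
  exact (splitSet_spec hbasis hcpt (treeS hbasis hcpt n w) (1/2^n) (by positivity)).2.2.2.2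

/-- A point of each tree node. -/
noncomputable def treePt (n : ℕ) (w : ℕ → ℕ+) : X := (treeS hbasis hcpt n w).2.2.some

lemma treePt_mem (n : ℕ) (w : ℕ → ℕ+) :
    treePt hbasis hcpt n w ∈ (treeS hbasis hcpt n w : Set X) :=
  (treeS hbasis hcpt n w).2.2.some_mem

lemma treePt_cauchy (w : ℕ → ℕ+) : CauchySeq (fun n => treePt hbasis hcpt n w) := by
  rw [Metric.cauchySeq_iff']
  intro ε hε
  obtain ⟨N, hN⟩ := exists_pow_lt_of_lt_one hε (by norm_num : (1:ℝ)/2 < 1)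
  refine ⟨N + 1, fun n hn => ?_⟩
  have h1 : treePt hbasis hcpt n w ∈ (treeS hbasis hcpt (N+1) w : Set X) :=
    treeS_anti hbasis hcpt hn w (treePt_mem hbasis hcpt n w)
  have h2 := treePt_mem hbasis hcpt (N+1) w
  calc dist (treePt hbasis hcpt n w) (treePt hbasis hcpt (N+1) w) ≤ 1/2^N :=
        treeS_small hbasis hcpt N w _ h1 _ h2
    _ = (1/2)^N := by rw [div_pow, one_pow]
    _ < ε := hN

/-- The limit point along a branch. -/
noncomputable def treeLim (w : ℕ → ℕ+) : X :=
  (cauchySeq_tendsto_of_complete (treePt_cauchy hbasis hcpt w)).choose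

lemma treeLim_spec (w : ℕ → ℕ+) :
    Filter.Tendsto (fun n => treePt hbasis hcpt n w) Filter.atTop
      (nhds (treeLim hbasis hcpt w)) :=
  (cauchySeq_tendsto_of_complete (treePt_cauchy hbasis hcpt w)).choose_spec

lemma treeLim_mem (n : ℕ) (w : ℕ → ℕ+) :
    treeLim hbasis hcpt w ∈ (treeS hbasis hcpt n w : Set X) := by
  refine (treeS hbasis hcpt n w).2.1.isClosed.mem_of_tendsto (treeLim_spec hbasis hcpt w) ?_
  refine Filter.eventually_atTop.2 ⟨n, fun m hm => ?_⟩
  exact treeS_anti hbasis hcpt hm w (treePt_mem hbasis hcpt m w)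

lemma treeLim_dist {x : X} {n : ℕ} {w : ℕ → ℕ+}
    (hx : x ∈ (treeS hbasis hcpt (n+1) w : Set X)) :
    dist x (treeLim hbasis hcpt w) ≤ 1/2^n :=
  treeS_small hbasis hcpt n w _ hx _ (treeLim_mem hbasis hcpt (n+1) w)

lemma treeLim_unique {x : X} {w : ℕ → ℕ+}
    (hx : ∀ n, x ∈ (treeS hbasis hcpt n w : Set X)) : x = treeLim hbasis hcpt w := by
  by_contra h
  have hd : 0 < dist x (treeLim hbasis hcpt w) := dist_pos.2 h
  obtain ⟨N, hN⟩ := exists_pow_lt_of_lt_one hd (by norm_num : (1:ℝ)/2 < 1)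
  have := treeLim_dist hbasis hcpt (hx (N+1))
  rw [show (1:ℝ)/2^N = (1/2)^N by rw [div_pow, one_pow]] at this
  linarith

lemma treeLim_injective : Function.Injective (treeLim hbasis hcpt) := by
  intro w w' h
  by_contra hne
  have hex : ∃ n, w n ≠ w' n := by
    by_contra h'
    push_neg at h'
    exact hne (funext h')
  classical
  set n := Nat.find hex with hn
  have h1 : w n ≠ w' n := Nat.find_spec hex
  have h2 : ∀ i, i < n → w i = w' i := fun i hi => by
    by_contra hc
    exact Nat.find_min hex hi hc
  have hdisj := treeS_disjoint hbasis hcpt h1 h2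
  exact Set.disjoint_left.1 hdisj (treeLim_mem hbasis hcpt (n+1) w)
    (h ▸ treeLim_mem hbasis hcpt (n+1) w')

/-- One step of the branch construction for surjectivity. -/
noncomputable def branchStep (x : X) (n : ℕ)
    (p : {w : ℕ → ℕ+ // x ∈ (treeS hbasis hcpt n w : Set X)}) :
    {w : ℕ → ℕ+ // x ∈ (treeS hbasis hcpt (n+1) w : Set X)} :=
  have hx : x ∈ ⋃ a : ℕ+, (treeS hbasis hcpt (n+1) (Function.update p.1 n a) : Set X) := by
    rw [treeS_succ_union]; exact p.2
  ⟨Function.update p.1 n (mem_iUnion.1 hx).choose, (mem_iUnion.1 hx).choose_spec⟩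

/-- The branch of tree nodes through a given point. -/
noncomputable def branch (x : X) : (n : ℕ) → {w : ℕ → ℕ+ // x ∈ (treeS hbasis hcpt n w : Set X)}
  | 0 => ⟨fun _ => 1, by simp [treeS]⟩
  | (n+1) => branchStep hbasis hcpt x n (branch x n)

lemma branch_stable (x : X) : ∀ n i, i < n →
    (branch hbasis hcpt x n).1 i = (branch hbasis hcpt x (i+1)).1 i := by
  intro n
  induction n with
  | zero => intro i hi; exact absurd hi (Nat.not_lt_zero i)
  | succ k ih =>
    intro i hi
    rcases Nat.lt_succ_iff_lt_or_eq.1 hi with h | h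
    · have : (branch hbasis hcpt x (k+1)).1 i = (branch hbasis hcpt x k).1 i := by
        show (Function.update (branch hbasis hcpt x k).1 k _) i = _
        exact Function.update_of_ne (Nat.ne_of_lt h) _ _
      rw [this]; exact ih i h
    · rw [h]

/-- The full branch through `x`. -/
noncomputable def branchLim (x : X) : ℕ → ℕ+ := fun i => (branch hbasis hcpt x (i+1)).1 i

lemma mem_treeS_branchLim (x : X) (n : ℕ) :
    x ∈ (treeS hbasis hcpt n (branchLim hbasis hcpt x) : Set X) := by
  have : treeS hbasis hcpt n (branchLim hbasis hcpt x) =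
      treeS hbasis hcpt n (branch hbasis hcpt x n).1 := by
    refine treeS_congr hbasis hcpt n _ _ fun i hi => ?_
    exact (branch_stable hbasis hcpt x n i hi).symm
  rw [this]
  exact (branch hbasis hcpt x n).2

lemma treeLim_surjective : Function.Surjective (treeLim hbasis hcpt) := fun x =>
  ⟨branchLim hbasis hcpt x,
    (treeLim_unique hbasis hcpt (mem_treeS_branchLim hbasis hcpt x)).symm⟩

lemma eventually_coord_eq (w : ℕ → ℕ+) (i : ℕ) : ∀ᶠ w' in nhds w, w' i = w i := by
  have h : IsOpen ((fun w' : ℕ → ℕ+ => w' i) ⁻¹' ({w i} : Set ℕ+)) :=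
    (isOpen_discrete ({w i} : Set ℕ+)).preimage (continuous_apply i)
  exact Filter.eventually_of_mem (h.mem_nhds rfl) (fun w' hw' => hw')

lemma treeLim_continuous : Continuous (treeLim hbasis hcpt) := by
  rw [continuous_iff_continuousAt]
  intro w
  rw [ContinuousAt, Metric.tendsto_nhds]
  intro ε hε
  obtain ⟨N, hN⟩ := exists_pow_lt_of_lt_one hε (by norm_num : (1:ℝ)/2 < 1)
  have hev : ∀ᶠ w' in nhds w, ∀ i ∈ Finset.range (N+1), w' i = w i :=
    (Filter.eventually_all_finset _).2 fun i _ => eventually_coord_eq w i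
  filter_upwards [hev] with w' hw'
  have heq : treeS hbasis hcpt (N+1) w' = treeS hbasis hcpt (N+1) w :=
    treeS_congr hbasis hcpt (N+1) w' w fun i hi => hw' i (Finset.mem_range.2 hi)
  have h1 : treeLim hbasis hcpt w' ∈ (treeS hbasis hcpt (N+1) w : Set X) := by
    rw [← heq]; exact treeLim_mem hbasis hcpt (N+1) w'
  calc dist (treeLim hbasis hcpt w') (treeLim hbasis hcpt w) ≤ 1/2^N :=
        treeLim_dist hbasis hcpt h1
    _ = (1/2)^N := by rw [div_pow, one_pow]
    _ < ε := hN

lemma treeLim_coord_eq {w w' : ℕ → ℕ+} {i : ℕ}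
    (h : treeLim hbasis hcpt w' ∈ (treeS hbasis hcpt (i+1) w : Set X)) :
    ∀ j, j ≤ i → w' j = w j := by
  by_contra hc
  push_neg at hc
  have hex : ∃ j, w' j ≠ w j := ⟨hc.choose, hc.choose_spec.2⟩
  classical
  set j := Nat.find hex with hj
  have hji : j ≤ i := by
    obtain ⟨j0, hj0i, hj0⟩ := hc
    exact le_trans (Nat.find_min' hex hj0) hj0i
  have h1 : w' j ≠ w j := Nat.find_spec hex
  have h2 : ∀ k, k < j → w' k = w k := fun k hk => by
    by_contra hck
    exact Nat.find_min hex hk hck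
  have hdisj := treeS_disjoint hbasis hcpt h1 h2
  have hm1 : treeLim hbasis hcpt w' ∈ (treeS hbasis hcpt (j+1) w' : Set X) :=
    treeLim_mem hbasis hcpt (j+1) w'
  have hm2 : treeLim hbasis hcpt w' ∈ (treeS hbasis hcpt (j+1) w : Set X) :=
    treeS_anti hbasis hcpt (Nat.succ_le_succ hji) w h
  exact Set.disjoint_left.1 hdisj hm1 hm2

/-- The bijection between the Baire space and `X`. -/
noncomputable def treeEquiv : (ℕ → ℕ+) ≃ X :=
  Equiv.ofBijective (treeLim hbasis hcpt)
    ⟨treeLim_injective hbasis hcpt, treeLim_surjective hbasis hcpt⟩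

lemma treeEquiv_symm_spec (x : X) :
    treeLim hbasis hcpt ((treeEquiv hbasis hcpt).symm x) = x :=
  (treeEquiv hbasis hcpt).apply_symm_apply x

lemma treeEquiv_symm_continuous : Continuous ((treeEquiv hbasis hcpt).symm) := by
  apply continuous_pi
  intro i
  rw [continuous_iff_continuousAt]
  intro x
  set w := (treeEquiv hbasis hcpt).symm x with hw
  have hopen : IsOpen (treeS hbasis hcpt (i+1) w : Set X) :=
    (treeS hbasis hcpt (i+1) w).2.1.isOpen
  have hmem : x ∈ (treeS hbasis hcpt (i+1) w : Set X) := by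
    rw [← treeEquiv_symm_spec hbasis hcpt x]
    exact treeLim_mem hbasis hcpt (i+1) w
  have hev : ∀ᶠ x' in nhds x, ((treeEquiv hbasis hcpt).symm x') i = w i := by
    refine Filter.eventually_of_mem (hopen.mem_nhds hmem) (fun x' hx' => ?_)
    refine treeLim_coord_eq hbasis hcpt (w := w) (w' := (treeEquiv hbasis hcpt).symm x')
      ?_ i le_rfl
    rw [treeEquiv_symm_spec hbasis hcpt x']
    exact hx'
  exact tendsto_const_nhds.congr' (hev.mono fun a ha => ha.symm)

/-- The homeomorphism between the Baire space and `X`. -/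
noncomputable def treeHomeo : (ℕ → ℕ+) ≃ₜ X where
  toEquiv := treeEquiv hbasis hcpt
  continuous_toFun := treeLim_continuous hbasis hcpt
  continuous_invFun := treeEquiv_symm_continuous hbasis hcpt

end aux

lemma baireOdometerOne_continuous : Continuous baireOdometerOne := by
  apply continuous_pi
  intro i
  rw [continuous_iff_continuousAt]
  intro w
  have hev : ∀ᶠ w' in nhds w, baireOdometerOne w' i = baireOdometerOne w i := by
    filter_upwards [eventually_coord_eq w 0, eventually_coord_eq w 1,
      eventually_coord_eq w (i + 2 - (w 0 : ℕ))] with w' e0 e1 ek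
    simp only [baireOdometerOne]
    rw [e0, e1, ek]
  exact tendsto_const_nhds.congr' (hev.mono fun a ha => ha.symm)

/-- Any nonempty Polish zero-dimensional space, all of whose compact subsets
have empty interior, carries a continuous map topologically conjugate to the
odometer `O₁` on the Baire space `ℕ₁^ℕ`. -/
theorem exists_odometer_of_polish (X : Type*) [TopologicalSpace X] [PolishSpace X]
    [Nonempty X] [T2Space X]
    (hbasis : TopologicalSpace.IsTopologicalBasis {s : Set X | IsClopen s})
    (hcpt : ∀ K : Set X, IsCompact K → interior K = ∅) :
    ∃ OX : X → X, Continuous OX ∧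
      ∃ g : (ℕ → ℕ+) ≃ₜ X, ∀ w : ℕ → ℕ+, OX (g w) = g (baireOdometerOne w) := by
  letI := upgradeIsCompletelyMetrizable X
  have hb : IsTopologicalBasis {s : Set X | IsClopen s} := hbasis
  let g : (ℕ → ℕ+) ≃ₜ X := treeHomeo hb hcpt
  refine ⟨fun x => g (baireOdometerOne (g.symm x)), ?_, g, fun w => ?_⟩
  · exact g.continuous.comp (baireOdometerOne_continuous.comp g.symm.continuous)
  · simp only [Homeomorph.symm_apply_apply]
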